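/- arXiv:2306.12968 — 4 statements merged into one kernel-verified Lean document; each statement's English description precedes it below -/
import Mathlib

section
/- Lemma (from |I∖H| control, Lemma B.5/sizeH): in the LSBM, let φ ≤ 1/(p̄·(n·p̄)⁵). The probability of the joint event that the number of nodes failing (H1) or (H2) is at most φ/3 and yet |I ∖ H| > φ is at most exp(−(φ·n·p̄/(4(log(n·p̄))⁵))·log(2n/(φ·L·(log(n·p̄))⁵))); equivalently, whenever the number of nodes that do not satisfy (H1) or (H2) is less than φ/3, one has |I ∖ H| ≤ φ with probability at least 1 − exp(−ω(n·p̄)) (in the regime n·p̄ → ∞). -/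
open Finset Filter Real Asymptotics

/-- Unordered pairs of distinct nodes, represented as ordered pairs `(v, w)` with `v < w`. -/
abbrev Pairs (n : ℕ) : Type := {q : Fin n × Fin n // q.1 < q.2}

/-- A configuration of the LSBM: the cluster assignment `σ` together with the label observed
on each unordered pair of distinct nodes (labels in `{0, …, L}`). -/
abbrev Config (n K L : ℕ) : Type := (Fin n → Fin K) × (Pairs n → Fin (L + 1))

/-- The probability mass of a configuration: nodes get i.i.d. clusters with law `α`, and
conditionally on `σ` the pairs get independent labels with law `p (σ v) (σ w)`. -/
noncomputable def mass {n K L : ℕ} (α : Fin K → ℝ)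
    (p : Fin K → Fin K → Fin (L + 1) → ℝ) (c : Config n K L) : ℝ :=
  (∏ v, α (c.1 v)) * ∏ q : Pairs n, p (c.1 q.1.1) (c.1 q.1.2) (c.2 q)

/-- Probability of a set of configurations under the LSBM law. -/
noncomputable def Pr {n K L : ℕ} (α : Fin K → ℝ)
    (p : Fin K → Fin K → Fin (L + 1) → ℝ) (S : Set (Config n K L)) : ℝ :=
  ∑ c : Config n K L, Set.indicator S (mass α p) c

/-- Expectation of a function of the configuration under the LSBM law. -/
noncomputable def Ex {n K L : ℕ} (α : Fin K → ℝ)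
    (p : Fin K → Fin K → Fin (L + 1) → ℝ) (f : Config n K L → ℝ) : ℝ :=
  ∑ c : Config n K L, mass α p c * f c

/-- `Aobs E ℓ v w = 1` iff the pair `{v, w}` (with `v ≠ w`) received the label `ℓ`. -/
def Aobs {n L : ℕ} (E : Pairs n → Fin (L + 1)) (ℓ : Fin (L + 1)) (v w : Fin n) : ℕ :=
  if h : v < w then (if E ⟨(v, w), h⟩ = ℓ then 1 else 0)
  else if h' : w < v then (if E ⟨(w, v), h'⟩ = ℓ then 1 else 0) else 0

/-- `e(v, S, ℓ)`: the number of nodes `w ∈ S` such that the pair `{v, w}` has label `ℓ`. -/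
def eCnt {n L : ℕ} (E : Pairs n → Fin (L + 1)) (v : Fin n) (S : Finset (Fin n))
    (ℓ : Fin (L + 1)) : ℕ :=
  ∑ w ∈ S, Aobs E ℓ v w

/-- `e(v, S) = Σ_{ℓ=1}^L e(v, S, ℓ)`. -/
def eTot {n L : ℕ} (E : Pairs n → Fin (L + 1)) (v : Fin n) (S : Finset (Fin n)) : ℕ :=
  ∑ ℓ ∈ univ.filter (fun ℓ : Fin (L + 1) => ℓ ≠ 0), eCnt E v S ℓ

/-- The cluster `I_k = {v : σ(v) = k}`. -/
def clusterSet {n K : ℕ} (σ : Fin n → Fin K) (k : Fin K) : Finset (Fin n) :=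
  univ.filter fun v => σ v = k

/-- KL divergence between two probability vectors on `{0, …, L}`. -/
noncomputable def kl {L : ℕ} (x y : Fin (L + 1) → ℝ) : ℝ :=
  ∑ ℓ, x ℓ * Real.log (x ℓ / y ℓ)

/-- Row-stochastic `K × (L+1)` matrices. -/
def IsStochastic {K L : ℕ} (y : Fin K → Fin (L + 1) → ℝ) : Prop :=
  ∀ k, (∀ ℓ, 0 ≤ y k ℓ) ∧ ∑ ℓ, y k ℓ = 1

/-- The divergence `D_{L+}(α, p(i), p(j))`. -/
noncomputable def DLplus {K L : ℕ} (α : Fin K → ℝ)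
    (pi pj : Fin K → Fin (L + 1) → ℝ) : ℝ :=
  sInf { d | ∃ y, IsStochastic y ∧
    d = max (∑ k, α k * kl (y k) (pi k)) (∑ k, α k * kl (y k) (pj k)) }

/-- The divergence `D(α, p)`. -/
noncomputable def Ddiv {K L : ℕ} (α : Fin K → ℝ)
    (p : Fin K → Fin K → Fin (L + 1) → ℝ) : ℝ :=
  sInf { d | ∃ i j, i ≠ j ∧ d = DLplus α (p i) (p j) }

/-- Condition (H1): the degree of `v` is at most `C_{H1}·n·p̄`. -/
def H1cond {n K L : ℕ} (CH1 pb : ℝ) (c : Config n K L) (v : Fin n) : Prop :=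
  (eTot c.2 v univ : ℝ) ≤ CH1 * ((n : ℝ) * pb)

/-- Condition (H2): for `v ∈ I_k`,
`Σ_i Σ_ℓ e(v,I_i,ℓ)·log(p(k,i,ℓ)/p(j,i,ℓ)) ≥ n·p̄/(log(n·p̄))⁴` for all `j ≠ k`. -/
def H2cond {n K L : ℕ} (pb : ℝ) (p : Fin K → Fin K → Fin (L + 1) → ℝ)
    (c : Config n K L) (v : Fin n) : Prop :=
  ∀ j : Fin K, j ≠ c.1 v →
    (n : ℝ) * pb / (Real.log ((n : ℝ) * pb)) ^ 4 ≤
      ∑ i : Fin K, ∑ ℓ : Fin (L + 1),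
        (eCnt c.2 v (clusterSet c.1 i) ℓ : ℝ) * Real.log (p (c.1 v) i ℓ / p j i ℓ)

/-- A set `S` is good if every `v ∈ S` satisfies (H1), (H2), and (H3) with respect to `S`,
i.e. `e(v, I∖S) ≤ 2·n·p̄/(log(n·p̄))⁵`. -/
def GoodSet {n K L : ℕ} (CH1 pb : ℝ) (p : Fin K → Fin K → Fin (L + 1) → ℝ)
    (c : Config n K L) (S : Finset (Fin n)) : Prop :=
  ∀ v ∈ S, H1cond CH1 pb c v ∧ H2cond pb p c v ∧
    (eTot c.2 v (univ \ S) : ℝ) ≤ 2 * ((n : ℝ) * pb) / (Real.log ((n : ℝ) * pb)) ^ 5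

open Classical in
/-- The set `H`: the largest subset of `I` all of whose elements satisfy (H1)–(H3), obtained
as the union of all good sets (the family of good sets is closed under unions). -/
noncomputable def Hset {n K L : ℕ} (CH1 pb : ℝ) (p : Fin K → Fin K → Fin (L + 1) → ℝ)
    (c : Config n K L) : Finset (Fin n) :=
  ((univ : Finset (Finset (Fin n))).filter fun S => GoodSet CH1 pb p c S).sup id

/-!
Let `B` be the set of nodes failing (H1) or (H2), with `|B| ≤ φ/3 < φ < |I ∖ H|`. Grow `B` one
node at a time, `⌈φ/2⌉` times: the complement of the current set is not a good set (it would
otherwise lie in `H`), so some node outside the set satisfies (H1) and (H2) but has more than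
`2np̄/log⁵(np̄)` labeled pairs into it. The final set `T` has at most `s = ⌊φ/3⌋ + ⌈φ/2⌉` nodes
and spans at least `r = ⌈φnp̄/log⁵(np̄)⌉` labeled pairs. A union bound over such `T` and over `r`
of their pairs bounds the probability by `C(n,s)·C(s²,r)·(Lp̄)^r ≤ (en/s)^s·(es²Lp̄/r)^r`. With
`X = 2n/(φL log⁵(np̄))`, the constraint `φ ≤ 1/(p̄(np̄)⁵)` gives `X ≥ 2(np̄)⁵`, the first factor
is at most `X^{2s}` and the second at most `X^{-r/2}`, and `s = O(φ)` is negligible against `r`.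
-/

variable {n K L : ℕ}

section Counting

variable {E : Pairs n → Fin (L + 1)}

def pairsIn (T : Finset (Fin n)) : Finset (Pairs n) :=
  univ.filter fun q => q.1.1 ∈ T ∧ q.1.2 ∈ T

def labeledPairsIn (E : Pairs n → Fin (L + 1)) (T : Finset (Fin n)) : Finset (Pairs n) :=
  (pairsIn T).filter fun q => E q ≠ 0

lemma card_pairsIn_le (T : Finset (Fin n)) : #(pairsIn T) ≤ #T * #T := by
  rw [← card_product]
  exact card_le_card_of_injOn Subtype.val
    (fun q hq => by simpa [pairsIn] using hq) Subtype.val_injective.injOn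

lemma labeledPairsIn_mono {T T' : Finset (Fin n)} (h : T ⊆ T') :
    labeledPairsIn E T ⊆ labeledPairsIn E T' := by
  intro q
  simp only [labeledPairsIn, pairsIn, mem_filter, mem_univ, true_and]
  exact fun ⟨⟨h1, h2⟩, h0⟩ => ⟨⟨h h1, h h2⟩, h0⟩

/-- The label of the pair `{v, w}`, and `0` when `v = w`. -/
def edgeLabel (E : Pairs n → Fin (L + 1)) (v w : Fin n) : Fin (L + 1) :=
  if h : v < w then E ⟨(v, w), h⟩ else if h' : w < v then E ⟨(w, v), h'⟩ else 0

lemma Aobs_eq_ite {ℓ : Fin (L + 1)} (hℓ : ℓ ≠ 0) (v w : Fin n) :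
    Aobs E ℓ v w = if edgeLabel E v w = ℓ then 1 else 0 := by
  unfold Aobs edgeLabel
  split_ifs <;> simp_all

lemma eTot_eq_card_filter (v : Fin n) (T : Finset (Fin n)) :
    eTot E v T = #{w ∈ T | edgeLabel E v w ≠ 0} := by
  simp only [card_filter, eTot, eCnt]
  rw [sum_comm]
  refine sum_congr rfl fun w _ => ?_
  rw [sum_congr rfl fun ℓ hℓ => Aobs_eq_ite (mem_filter.mp hℓ).2 v w, sum_ite_eq]
  simp

lemma card_labeledPairsIn_add_eTot_le {v : Fin n} {T : Finset (Fin n)} (hv : v ∉ T) :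
    #(labeledPairsIn E T) + eTot E v T ≤ #(labeledPairsIn E (insert v T)) := by
  have hsub := labeledPairsIn_mono (E := E) (subset_insert v T)
  rw [← card_sdiff_add_card_eq_card hsub, add_comm, eTot_eq_card_filter]
  gcongr
  -- a labeled pair `{v, w}` with `w ∈ T` is sent to its endpoint `w`
  refine card_le_card_of_surjOn (fun q => if q.1.1 = v then q.1.2 else q.1.1) ?_
  intro w hw
  obtain ⟨hwT, hw0⟩ := mem_filter.mp hw
  have hvw : v ≠ w := fun h => hv (h ▸ hwT)
  unfold edgeLabel at hw0
  split_ifs at hw0 with h h'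
  · refine ⟨⟨(v, w), h⟩, ?_, by simp⟩
    simp [labeledPairsIn, pairsIn, hwT, hw0, hv]
  · refine ⟨⟨(w, v), h'⟩, ?_, by simp [hvw.symm]⟩
    simp [labeledPairsIn, pairsIn, hwT, hw0, hv]
  · exact absurd rfl hw0

end Counting

section Probability

variable {α : Fin K → ℝ} {p : Fin K → Fin K → Fin (L + 1) → ℝ}

lemma mass_nonneg (hα : ∀ k, 0 ≤ α k) (hp : ∀ i j ℓ, 0 ≤ p i j ℓ) (c : Config n K L) :
    0 ≤ mass α p c :=
  mul_nonneg (prod_nonneg fun _ _ => hα _) (prod_nonneg fun _ _ => hp _ _ _)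

lemma Pr_empty : Pr α p (∅ : Set (Config n K L)) = 0 := by
  simp [Pr]

lemma Pr_mono (hα : ∀ k, 0 ≤ α k) (hp : ∀ i j ℓ, 0 ≤ p i j ℓ) {S S' : Set (Config n K L)}
    (h : S ⊆ S') : Pr α p S ≤ Pr α p S' :=
  sum_le_sum fun c _ =>
    Set.indicator_le_indicator_of_subset h (fun c => mass_nonneg hα hp c) c

lemma Pr_biUnion_le {ι : Type*} (hα : ∀ k, 0 ≤ α k) (hp : ∀ i j ℓ, 0 ≤ p i j ℓ)
    (A : Finset ι) (f : ι → Set (Config n K L)) :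
    Pr α p (⋃ i ∈ A, f i) ≤ ∑ i ∈ A, Pr α p (f i) := by
  unfold Pr
  rw [sum_comm]
  refine sum_le_sum fun c _ => ?_
  have hnonneg : ∀ i, 0 ≤ Set.indicator (f i) (mass α p) c :=
    fun i => Set.indicator_nonneg (fun c _ => mass_nonneg hα hp c) c
  by_cases hc : c ∈ ⋃ i ∈ A, f i
  · obtain ⟨i, hiA, hci⟩ := Set.mem_iUnion₂.mp hc
    rw [Set.indicator_of_mem hc, ← Set.indicator_of_mem hci (mass α p)]
    exact single_le_sum (fun i _ => hnonneg i) hiA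
  · rw [Set.indicator_of_notMem hc]
    exact sum_nonneg fun i _ => hnonneg i

lemma sum_prod_eq_one (hαsum : ∑ k, α k = 1) : ∑ σ : Fin n → Fin K, ∏ v, α (σ v) = 1 := by
  rw [← Fintype.prod_sum (fun (_ : Fin n) k => α k)]
  simp [hαsum]

lemma sum_erase_zero_le_mul {pb : ℝ} (hub : ∀ ℓ : Fin (L + 1), ℓ ≠ 0 → p i j ℓ ≤ pb) :
    ∑ ℓ ∈ univ.erase 0, p i j ℓ ≤ L * pb := by
  calc ∑ ℓ ∈ univ.erase 0, p i j ℓ ≤ #(univ.erase (0 : Fin (L + 1))) • pb :=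
        sum_le_card_nsmul _ _ _ fun ℓ hℓ => hub ℓ (ne_of_mem_erase hℓ)
    _ = L * pb := by simp

lemma Pr_forall_ne_zero_le (hα : ∀ k, 0 ≤ α k) (hαsum : ∑ k, α k = 1)
    (hp : ∀ i j ℓ, 0 ≤ p i j ℓ) (hpsum : ∀ i j, ∑ ℓ, p i j ℓ = 1)
    {pb : ℝ} (hub : ∀ i j ℓ, ℓ ≠ 0 → p i j ℓ ≤ pb) (F : Finset (Pairs n)) :
    Pr α p {c : Config n K L | ∀ q ∈ F, c.2 q ≠ 0} ≤ (L * pb) ^ #F := by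
  -- conditionally on `σ`, the law of the labels is a product measure over the pairs
  let g (σ : Fin n → Fin K) (q : Pairs n) (ℓ : Fin (L + 1)) : ℝ :=
    if q ∈ F ∧ ℓ = 0 then 0 else p (σ q.1.1) (σ q.1.2) ℓ
  have hind : ∀ σ E, Set.indicator {c : Config n K L | ∀ q ∈ F, c.2 q ≠ 0} (mass α p) (σ, E)
      = (∏ v, α (σ v)) * ∏ q, g σ q (E q) := by
    intro σ E
    by_cases hE : ∀ q ∈ F, E q ≠ 0
    · rw [Set.indicator_of_mem (by exact hE)]
      refine congrArg _ (prod_congr rfl fun q _ => ?_)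
      simp only [g, if_neg fun h : q ∈ F ∧ E q = 0 => hE q h.1 h.2]
    · rw [Set.indicator_of_notMem (by exact hE)]
      push Not at hE
      obtain ⟨q, hqF, hq0⟩ := hE
      rw [prod_eq_zero (mem_univ q) (by simp [g, hqF, hq0]), mul_zero]
  have hrow : ∀ σ q, ∑ ℓ, g σ q ℓ ≤ if q ∈ F then (L : ℝ) * pb else 1 := by
    intro σ q
    by_cases hqF : q ∈ F
    · rw [if_pos hqF, ← add_sum_erase _ _ (mem_univ 0)]
      simp only [g, hqF, true_and, if_true, zero_add]
      exact (sum_congr rfl fun ℓ hℓ => if_neg (ne_of_mem_erase hℓ)).trans_le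
        (sum_erase_zero_le_mul (hub (σ q.1.1) (σ q.1.2)))
    · simp [g, hqF, hpsum]
  calc Pr α p {c : Config n K L | ∀ q ∈ F, c.2 q ≠ 0}
      = ∑ σ, (∏ v, α (σ v)) * ∏ q, ∑ ℓ, g σ q ℓ := by
        simp only [Pr, Fintype.sum_prod_type, hind, ← mul_sum, Fintype.prod_sum]
    _ ≤ ∑ σ : Fin n → Fin K, (∏ v, α (σ v)) * ∏ q, if q ∈ F then (L : ℝ) * pb else 1 := by
        refine sum_le_sum fun σ _ => mul_le_mul_of_nonneg_left
          (prod_le_prod (fun q _ => sum_nonneg fun ℓ _ => ?_) fun q _ => hrow σ q)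
          (prod_nonneg fun _ _ => hα _)
        dsimp only [g]
        split_ifs
        exacts [le_rfl, hp _ _ _]
    _ = (L * pb) ^ #F := by
        rw [prod_ite_mem, univ_inter, prod_const, ← sum_mul, sum_prod_eq_one hαsum, one_mul]

lemma Pr_exists_labeled_le (hα : ∀ k, 0 ≤ α k) (hαsum : ∑ k, α k = 1)
    (hp : ∀ i j ℓ, 0 ≤ p i j ℓ) (hpsum : ∀ i j, ∑ ℓ, p i j ℓ = 1)
    {pb : ℝ} (hpb : 0 ≤ pb) (hub : ∀ i j ℓ, ℓ ≠ 0 → p i j ℓ ≤ pb) (s r : ℕ) :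
    Pr α p {c : Config n K L | ∃ T ∈ powersetCard s univ,
        ∃ F ∈ powersetCard r (pairsIn T), ∀ q ∈ F, c.2 q ≠ 0} ≤
      n.choose s * ((s * s).choose r * (L * pb) ^ r) := by
  have hset : {c : Config n K L | ∃ T ∈ powersetCard s univ,
      ∃ F ∈ powersetCard r (pairsIn T), ∀ q ∈ F, c.2 q ≠ 0} =
      ⋃ T ∈ powersetCard s univ, ⋃ F ∈ powersetCard r (pairsIn T),
        {c : Config n K L | ∀ q ∈ F, c.2 q ≠ 0} := by
    ext c
    simp only [Set.mem_ofPred_eq, Set.mem_iUnion, exists_prop]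
  rw [hset]
  calc _ ≤ ∑ T ∈ powersetCard s univ, Pr α p (⋃ F ∈ powersetCard r (pairsIn T),
          {c : Config n K L | ∀ q ∈ F, c.2 q ≠ 0}) := Pr_biUnion_le hα hp _ _
    _ ≤ ∑ T ∈ powersetCard s (univ : Finset (Fin n)),
          ∑ F ∈ powersetCard r (pairsIn T), ((L : ℝ) * pb) ^ r := by
        refine sum_le_sum fun T _ => (Pr_biUnion_le hα hp _ _).trans
          (sum_le_sum fun F hF => ?_)
        rw [← (mem_powersetCard.mp hF).2]
        exact Pr_forall_ne_zero_le hα hαsum hp hpsum hub F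
    _ ≤ ∑ T ∈ powersetCard s (univ : Finset (Fin n)), ((s * s).choose r * ((L : ℝ) * pb) ^ r) := by
        refine sum_le_sum fun T hT => ?_
        rw [sum_const, card_powersetCard, nsmul_eq_mul]
        gcongr
        exact (mem_powersetCard.mp hT).2 ▸ card_pairsIn_le T
    _ = _ := by rw [sum_const, card_powersetCard, card_univ, Fintype.card_fin, nsmul_eq_mul]

end Probability

section Peeling

variable {CH1 pb : ℝ} {p : Fin K → Fin K → Fin (L + 1) → ℝ} {c : Config n K L}

open Classical in
noncomputable def badSet (CH1 pb : ℝ) (p : Fin K → Fin K → Fin (L + 1) → ℝ) (c : Config n K L) :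
    Finset (Fin n) :=
  univ.filter fun v => ¬(H1cond CH1 pb c v ∧ H2cond pb p c v)

open Classical in
lemma GoodSet.subset_Hset {S : Finset (Fin n)} (h : GoodSet CH1 pb p c S) : S ⊆ Hset CH1 pb p c :=
  le_sup (f := id) (mem_filter.mpr ⟨mem_univ S, h⟩)

lemma Hset_eq_univ_of_card_badSet_lt_one (ht : 1 ≤ (n : ℝ) * pb)
    (hB : (#(badSet CH1 pb p c) : ℝ) < 1) : Hset CH1 pb p c = univ := by
  have hB0 : badSet CH1 pb p c = ∅ := card_eq_zero.mp (Nat.lt_one_iff.mp (mod_cast hB))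
  refine eq_univ_of_forall fun v => GoodSet.subset_Hset (fun v _ => ?_) (mem_univ v)
  have hv : v ∉ badSet CH1 pb p c := hB0 ▸ notMem_empty v
  simp only [badSet, mem_filter, mem_univ, true_and, not_not] at hv
  refine ⟨hv.1, hv.2, ?_⟩
  have h0 : eTot c.2 v (univ \ univ) = 0 := by simp [eTot, eCnt]
  rw [h0, Nat.cast_zero]
  exact div_nonneg (by linarith) (pow_nonneg (Real.log_nonneg ht) 5)

lemma exists_not_H3 {T : Finset (Fin n)} (hBT : badSet CH1 pb p c ⊆ T)
    (hT : #T < #(univ \ Hset CH1 pb p c)) :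
    ∃ v ∉ T, 2 * ((n : ℝ) * pb) / (Real.log ((n : ℝ) * pb)) ^ 5 < eTot c.2 v T := by
  have hgood : ¬ GoodSet CH1 pb p c (univ \ T) := fun hgood =>
    hT.not_ge (card_le_card fun v hv => by
      by_contra hvT
      exact (mem_sdiff.mp hv).2 (hgood.subset_Hset (mem_sdiff.mpr ⟨mem_univ v, hvT⟩)))
  simp only [GoodSet, not_forall, not_and, not_le, sdiff_sdiff_right_self, inf_eq_inter,
    univ_inter] at hgood
  obtain ⟨v, hvT, hv⟩ := hgood
  have hvB : v ∉ badSet CH1 pb p c := fun h => (mem_sdiff.mp hvT).2 (hBT h)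
  simp only [badSet, mem_filter, mem_univ, true_and, not_not] at hvB
  exact ⟨v, (mem_sdiff.mp hvT).2, hv hvB.1 hvB.2⟩

lemma exists_superset_badSet (m : ℕ)
    (hm : #(badSet CH1 pb p c) + m ≤ #(univ \ Hset CH1 pb p c)) :
    ∃ T, badSet CH1 pb p c ⊆ T ∧ #T = #(badSet CH1 pb p c) + m ∧
      m * (2 * ((n : ℝ) * pb) / (Real.log ((n : ℝ) * pb)) ^ 5) ≤ #(labeledPairsIn c.2 T) := by
  induction m with
  | zero => exact ⟨badSet CH1 pb p c, subset_rfl, rfl, by simp⟩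
  | succ m ih =>
    obtain ⟨T, hBT, hTcard, hTlab⟩ := ih (by omega)
    obtain ⟨v, hvT, hv⟩ := exists_not_H3 hBT (by omega)
    refine ⟨insert v T, hBT.trans (subset_insert v T), by rw [card_insert_of_notMem hvT]; omega,
      ?_⟩
    have hgrow : (#(labeledPairsIn c.2 T) : ℝ) + eTot c.2 v T ≤
        #(labeledPairsIn c.2 (insert v T)) := mod_cast card_labeledPairsIn_add_eTot_le hvT
    push_cast
    linarith

lemma floor_add_ceil_lt {φ : ℝ} (hφ : 0 ≤ φ) : ((⌊φ / 3⌋₊ + ⌈φ / 2⌉₊ : ℕ) : ℝ) < φ + 1 := by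
  have := Nat.floor_le (by positivity : 0 ≤ φ / 3)
  have := Nat.ceil_lt_add_one (by positivity : 0 ≤ φ / 2)
  push_cast
  linarith

lemma exists_labeled_of_mem_event {φ : ℝ} (hφ : 0 ≤ φ) (ht : 1 ≤ (n : ℝ) * pb)
    (hB : (#(badSet CH1 pb p c) : ℝ) ≤ φ / 3) (hH : φ < #(univ \ Hset CH1 pb p c)) :
    ∃ T ∈ powersetCard (⌊φ / 3⌋₊ + ⌈φ / 2⌉₊) univ,
      ∃ F ∈ powersetCard ⌈φ * ((n : ℝ) * pb) / (Real.log ((n : ℝ) * pb)) ^ 5⌉₊ (pairsIn T),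
        ∀ q ∈ F, c.2 q ≠ 0 := by
  set s := ⌊φ / 3⌋₊ + ⌈φ / 2⌉₊
  have hBs : #(badSet CH1 pb p c) ≤ ⌊φ / 3⌋₊ := Nat.le_floor hB
  have hsH : s ≤ #(univ \ Hset CH1 pb p c) := by
    have hs : (s : ℝ) < φ + 1 := floor_add_ceil_lt hφ
    have hs' : (s : ℝ) < #(univ \ Hset CH1 pb p c) + 1 := by linarith
    exact Nat.lt_add_one_iff.mp (by exact_mod_cast hs')
  have hm : #(badSet CH1 pb p c) + ⌈φ / 2⌉₊ ≤ #(univ \ Hset CH1 pb p c) := by omega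
  obtain ⟨T₀, hBT₀, hT₀, hT₀lab⟩ := exists_superset_badSet _ hm
  obtain ⟨T, hT₀T, hT⟩ := exists_superset_card_eq (s := T₀) (n := s) (by omega)
    (hsH.trans (card_le_univ _))
  have hr : ⌈φ * ((n : ℝ) * pb) / (Real.log ((n : ℝ) * pb)) ^ 5⌉₊ ≤ #(labeledPairsIn c.2 T) := by
    have hlog : 0 ≤ Real.log ((n : ℝ) * pb) := Real.log_nonneg ht
    refine Nat.ceil_le.mpr (le_trans ?_ (hT₀lab.trans (mod_cast card_le_card
      (labeledPairsIn_mono hT₀T))))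
    calc φ * ((n : ℝ) * pb) / (Real.log ((n : ℝ) * pb)) ^ 5
        = φ / 2 * (2 * ((n : ℝ) * pb) / (Real.log ((n : ℝ) * pb)) ^ 5) := by ring
      _ ≤ _ := mul_le_mul_of_nonneg_right (Nat.le_ceil _)
          (div_nonneg (by linarith) (pow_nonneg hlog 5))
  obtain ⟨F, hFT, hF⟩ := exists_subset_card_eq hr
  refine ⟨T, mem_powersetCard.mpr ⟨subset_univ T, hT⟩, F,
    mem_powersetCard.mpr ⟨hFT.trans (filter_subset _ _), hF⟩, fun q hq => ?_⟩
  exact (mem_filter.mp (hFT hq)).2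

end Peeling

section Estimates

lemma choose_le_exp_mul_div_pow (a b : ℕ) : (a.choose b : ℝ) ≤ (Real.exp 1 * a / b) ^ b := by
  rcases Nat.eq_zero_or_pos b with rfl | hb
  · simp
  have hb' : (0 : ℝ) < b := Nat.cast_pos.mpr hb
  calc (a.choose b : ℝ) ≤ a ^ b / b.factorial := Nat.choose_le_pow_div b a
    _ = (a / b) ^ b * (b ^ b / b.factorial) := by
        rw [div_pow, ← mul_div_assoc, div_mul_cancel₀ _ (by positivity)]
    _ ≤ (a / b) ^ b * Real.exp b := by
        gcongr
        exact Real.pow_div_factorial_le_exp _ (Nat.cast_nonneg b) b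
    _ = (Real.exp 1 * a / b) ^ b := by rw [← Real.exp_one_pow, ← mul_pow, mul_comm, mul_div_assoc]

lemma choose_mul_choose_mul_pow_le (n s r : ℕ) {y : ℝ} (hy : 0 ≤ y) :
    n.choose s * ((s * s).choose r * y ^ r) ≤
      (Real.exp 1 * n / s) ^ s * (Real.exp 1 * (s * s) / r * y) ^ r := by
  rw [mul_pow]
  gcongr
  · exact choose_le_exp_mul_div_pow n s
  · exact_mod_cast choose_le_exp_mul_div_pow (s * s) r

lemma eight_mul_exp_one_le_exp_four : 8 * Real.exp 1 ≤ Real.exp 4 := by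
  have h8 : (8 : ℝ) ≤ Real.exp 1 ^ 3 := by
    calc (8 : ℝ) = 2 ^ 3 := by norm_num
      _ ≤ Real.exp 1 ^ 3 := by gcongr; linarith [Real.add_one_le_exp 1]
  calc 8 * Real.exp 1 ≤ Real.exp 1 ^ 3 * Real.exp 1 := by gcongr
    _ = Real.exp 4 := by rw [← pow_succ, Real.exp_one_pow]; norm_num

lemma pow_mul_pow_le_exp {A B x R : ℝ} {s r : ℕ} (hA0 : 0 ≤ A) (hB0 : 0 ≤ B)
    (hA : A ≤ Real.exp (2 * x)) (hB : B ≤ Real.exp (-(x / 2))) (hx : 0 ≤ x)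
    (hs : 8 * s ≤ R) (hr : R ≤ r) : A ^ s * B ^ r ≤ Real.exp (-(R / 4) * x) := by
  calc A ^ s * B ^ r ≤ Real.exp (2 * x) ^ s * Real.exp (-(x / 2)) ^ r := by gcongr
    _ = Real.exp ((2 * s - r / 2) * x) := by
        rw [← Real.exp_nat_mul, ← Real.exp_nat_mul, ← Real.exp_add]
        ring_nf
    _ ≤ Real.exp (-(R / 4) * x) :=
        Real.exp_le_exp.mpr (mul_le_mul_of_nonneg_right (by linarith) hx)

lemma exp_one_mul_div_le_exp_two_mul_log {n s L : ℕ} {φ M : ℝ} (hφ : 0 < φ) (hLM : 0 < L * M)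
    (hs : φ / 2 ≤ s) (hMX : Real.exp 1 * (L * M) ≤ 2 * n / (φ * L * M)) :
    Real.exp 1 * n / s ≤ Real.exp (2 * Real.log (2 * n / (φ * L * M))) := by
  set X := 2 * n / (φ * L * M)
  have hX : 0 < X := (by positivity : 0 < Real.exp 1 * (L * M)).trans_le hMX
  rw [show 2 * Real.log X = Real.log (X ^ 2) by rw [Real.log_pow]; push_cast; ring,
    Real.exp_log (by positivity), sq]
  calc Real.exp 1 * n / s ≤ Real.exp 1 * n / (φ / 2) := by gcongr
    _ = Real.exp 1 * (L * M) * X := by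
        simp only [X]; field_simp; rw [mul_assoc, mul_div_cancel_right₀ _ hLM.ne']
    _ ≤ X * X := by gcongr

lemma two_mul_pow_five_le {n L : ℕ} {pb φ : ℝ} (hφ : 0 < φ) (hL : 1 ≤ L) (ht : 0 < n * pb)
    (hlog : 0 < Real.log (n * pb)) (hLlog : L * Real.log (n * pb) ^ 5 ≤ n * pb)
    (hφle : φ ≤ 1 / (pb * (n * pb) ^ 5)) :
    2 * (n * pb) ^ 5 ≤ 2 * n / (φ * L * Real.log (n * pb) ^ 5) := by
  have hn : (0 : ℝ) < n := Nat.cast_pos.mpr (Nat.pos_of_ne_zero (by rintro rfl; simp at ht))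
  have hpb : 0 < pb := pos_of_mul_pos_right ht hn.le
  have hL' : (0 : ℝ) < L := Nat.cast_pos.mpr hL
  rw [le_div_iff₀ (by positivity)]
  rw [le_div_iff₀ (by positivity)] at hφle
  calc 2 * (n * pb) ^ 5 * (φ * L * Real.log (n * pb) ^ 5)
      = 2 * (φ * (n * pb) ^ 5) * (L * Real.log (n * pb) ^ 5) := by ring
    _ ≤ 2 * (φ * (n * pb) ^ 5) * (n * pb) := by gcongr
    _ = 2 * (φ * (pb * (n * pb) ^ 5)) * n := by ring
    _ ≤ 2 * n := by nlinarith

lemma choose_mul_choose_mul_pow_le_exp {n L s r : ℕ} {pb φ : ℝ} (hL : 1 ≤ L) (hφ : 0 < φ)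
    (ht : Real.exp 4 ≤ n * pb) (hlog : (16 + L) * Real.log (n * pb) ^ 5 ≤ n * pb)
    (hφle : φ ≤ 1 / (pb * (n * pb) ^ 5))
    (hs : φ / 2 ≤ s) (hs' : s ≤ 2 * φ) (hr : φ * (n * pb) / Real.log (n * pb) ^ 5 ≤ r) :
    n.choose s * ((s * s).choose r * (L * pb) ^ r) ≤
      Real.exp (-(φ * (n * pb) / (4 * Real.log (n * pb) ^ 5)) *
        Real.log (2 * n / (φ * L * Real.log (n * pb) ^ 5))) := by
  set t : ℝ := n * pb
  set ℓ := Real.log t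
  set X := 2 * n / (φ * L * ℓ ^ 5)
  set R := φ * t / ℓ ^ 5
  have htpos : 0 < t := (Real.exp_pos 4).trans_le ht
  have hℓ : 4 ≤ ℓ := (Real.le_log_iff_exp_le htpos).mpr ht
  have hn : (0 : ℝ) < n := Nat.cast_pos.mpr (Nat.pos_of_ne_zero (by rintro rfl; simp [t] at htpos))
  have hpb : 0 < pb := pos_of_mul_pos_right htpos hn.le
  have hL' : (1 : ℝ) ≤ L := Nat.one_le_cast.mpr hL
  have hℓ5 : 0 < ℓ ^ 5 := by positivity
  have hLℓ : L * ℓ ^ 5 ≤ t := by nlinarith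
  have hX : 2 * t ^ 5 ≤ X := two_mul_pow_five_le hφ hL htpos (by positivity) hLℓ hφle
  have hXpos : 0 < X := by positivity
  have hlogX : 5 * ℓ ≤ Real.log X := by
    have h := Real.log_le_log (pow_pos htpos 5) (by linarith [pow_pos htpos 5] : t ^ 5 ≤ X)
    rw [Real.log_pow] at h
    exact_mod_cast h
  have hR : 16 * φ ≤ R := by
    rw [le_div_iff₀ hℓ5]
    nlinarith [mul_le_mul_of_nonneg_left (by nlinarith : 16 * ℓ ^ 5 ≤ t) hφ.le]
  have hfirst : Real.exp 1 * n / s ≤ Real.exp (2 * Real.log X) := by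
    refine exp_one_mul_div_le_exp_two_mul_log hφ (by positivity) hs ?_
    calc Real.exp 1 * (L * ℓ ^ 5) ≤ t * t := by
          gcongr; exact (Real.exp_le_exp.mpr (by norm_num)).trans ht
      _ ≤ t ^ 5 := by
          rw [← sq]; exact pow_le_pow_right₀ (by linarith [Real.add_one_le_exp 4]) (by norm_num)
      _ ≤ X := by linarith [pow_pos htpos 5]
  have hsecond : Real.exp 1 * (s * s) / r * (L * pb) ≤ Real.exp (-(Real.log X / 2)) := by
    calc Real.exp 1 * (s * s) / r * (L * pb) ≤ Real.exp 1 * (2 * φ * (2 * φ)) / R * (L * pb) := by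
          gcongr
      _ = 8 * Real.exp 1 / X := by simp only [X, R, t]; field_simp; ring
      _ ≤ Real.exp 4 / Real.exp (Real.log X) := by
          rw [Real.exp_log hXpos]; gcongr; exact eight_mul_exp_one_le_exp_four
      _ ≤ Real.exp (-(Real.log X / 2)) := by
          rw [← Real.exp_sub]
          exact Real.exp_le_exp.mpr (by linarith)
  calc (n.choose s : ℝ) * ((s * s).choose r * (L * pb) ^ r)
      ≤ (Real.exp 1 * n / s) ^ s * (Real.exp 1 * (s * s) / r * (L * pb)) ^ r :=
        choose_mul_choose_mul_pow_le n s r (by positivity)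
    _ ≤ Real.exp (-(R / 4) * Real.log X) :=
        pow_mul_pow_le_exp (by positivity) (by positivity) hfirst hsecond (by linarith)
          (by linarith) hr
    _ = _ := by simp only [R]; ring_nf

end Estimates

lemma eventually_exp_four_le_and_log_pow_le (a : ℝ) :
    ∀ᶠ x : ℝ in atTop, Real.exp 4 ≤ x ∧ a * Real.log x ^ 5 ≤ x := by
  have ha : 0 < |a| + 1 := by positivity
  filter_upwards [eventually_ge_atTop (Real.exp 4), eventually_ge_atTop 0,
    (isLittleO_pow_log_id_atTop (n := 5)).bound (inv_pos.mpr ha)] with x hx hx0 hbound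
  rw [Real.norm_eq_abs, id, Real.norm_of_nonneg hx0] at hbound
  refine ⟨hx, ?_⟩
  calc a * Real.log x ^ 5 ≤ (|a| + 1) * |Real.log x ^ 5| := by
        rw [add_mul, one_mul, ← abs_mul]
        linarith [le_abs_self (a * Real.log x ^ 5), abs_nonneg (Real.log x ^ 5)]
    _ ≤ (|a| + 1) * ((|a| + 1)⁻¹ * x) := by gcongr
    _ = x := by field_simp

open Classical in
theorem statement6_general
    (K L : ℕ) (hL : 1 ≤ L)
    (α : Fin K → ℝ) (hαpos : ∀ k, 0 < α k) (hαsum : ∑ k, α k = 1)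
    (p : ℕ → Fin K → Fin K → Fin (L + 1) → ℝ)
    (hp0 : ∀ n i j ℓ, 0 ≤ p n i j ℓ)
    (hpsum : ∀ n i j, ∑ ℓ, p n i j ℓ = 1)
    (pbar : ℕ → ℝ)
    (hpbar : ∀ n, IsGreatest {x | ∃ i j, ∃ ℓ : Fin (L + 1), ℓ ≠ 0 ∧ x = p n i j ℓ} (pbar n))
    (hgrow : Tendsto (fun n : ℕ => (n : ℝ) * pbar n) atTop atTop) :
    ∃ CH1 : ℝ, 0 < CH1 ∧
      ∀ φ : ℕ → ℝ, (∀ n, 0 < φ n) →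
        (∀ n : ℕ, φ n ≤ 1 / (pbar n * ((n : ℝ) * pbar n) ^ 5)) →
        ∀ᶠ n : ℕ in atTop,
          Pr α (p n) {c : Config n K L |
              (((univ.filter fun v =>
                  ¬(H1cond CH1 (pbar n) c v ∧ H2cond (pbar n) (p n) c v)).card : ℝ) ≤ φ n / 3)
              ∧ φ n < ((univ \ Hset CH1 (pbar n) (p n) c).card : ℝ)} ≤
            Real.exp (-(φ n * ((n : ℝ) * pbar n) / (4 * (Real.log ((n : ℝ) * pbar n)) ^ 5)) *
              Real.log (2 * (n : ℝ) / (φ n * L * (Real.log ((n : ℝ) * pbar n)) ^ 5))) := by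
  refine ⟨1, one_pos, fun φ hφpos hφle => ?_⟩
  filter_upwards [hgrow.eventually (eventually_exp_four_le_and_log_pow_le (16 + L))]
    with n ⟨ht, hlog⟩
  have hα : ∀ k, 0 ≤ α k := fun k => (hαpos k).le
  have hub : ∀ i j ℓ, ℓ ≠ 0 → p n i j ℓ ≤ pbar n := fun i j ℓ hℓ => (hpbar n).2 ⟨i, j, ℓ, hℓ, rfl⟩
  have ht1 : 1 ≤ (n : ℝ) * pbar n := (Real.one_le_exp (by norm_num)).trans ht
  have hpb : 0 ≤ pbar n := (pos_of_mul_pos_right (by linarith) (Nat.cast_nonneg n)).le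
  rcases lt_or_ge (φ n) 1 with hφ1 | hφ1
  · -- fewer than one bad node: then `H = I` and the event is empty
    refine ((Pr_mono hα (hp0 n) (S' := ∅) fun c hc => ?_).trans_eq Pr_empty).trans
      (Real.exp_pos _).le
    obtain ⟨hB, hH⟩ := hc
    rw [Hset_eq_univ_of_card_badSet_lt_one ht1 (by unfold badSet; linarith), sdiff_self,
      bot_eq_empty, card_empty, Nat.cast_zero] at hH
    exact absurd hH (hφpos n).le.not_gt
  · have hs := floor_add_ceil_lt (zero_le_one.trans hφ1)
    refine (Pr_mono hα (hp0 n) fun c hc => by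
      exact exists_labeled_of_mem_event (zero_le_one.trans hφ1) ht1 hc.1 hc.2).trans
      ((Pr_exists_labeled_le hα hαsum (hp0 n) (hpsum n) hpb hub _ _).trans
      (choose_mul_choose_mul_pow_le_exp hL (hφpos n) ht hlog (hφle n) ?_ (by linarith)
        (Nat.le_ceil _)))
    push_cast
    linarith [Nat.le_ceil (φ n / 2), Nat.cast_nonneg (α := ℝ) ⌊φ n / 3⌋₊]

open Classical in
/-- **Lemma B.5 (control of `|I∖H|`).** For `φ ≤ 1/(p̄(np̄)⁵)`, the probability that at most
`φ/3` nodes fail (H1) or (H2) and yet `|I∖H| > φ` is at most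
`exp(−(φ·n·p̄/(4 log⁵(n·p̄)))·log(2n/(φ·L·log⁵(n·p̄))))` (in the regime `n·p̄ → ∞`). -/
theorem statement6
    (K L : ℕ) (hK : 2 ≤ K) (hL : 1 ≤ L)
    (α : Fin K → ℝ) (hαpos : ∀ k, 0 < α k) (hαsum : ∑ k, α k = 1)
    (p : ℕ → Fin K → Fin K → Fin (L + 1) → ℝ)
    (hp0 : ∀ n i j ℓ, 0 ≤ p n i j ℓ) (hp1 : ∀ n i j ℓ, p n i j ℓ ≤ 1)
    (hpsym : ∀ n i j ℓ, p n i j ℓ = p n j i ℓ)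
    (hpsum : ∀ n i j, ∑ ℓ, p n i j ℓ = 1)
    (pbar : ℕ → ℝ)
    (hpbar : ∀ n, IsGreatest {x | ∃ i j, ∃ ℓ : Fin (L + 1), ℓ ≠ 0 ∧ x = p n i j ℓ} (pbar n))
    (hgrow : Tendsto (fun n : ℕ => (n : ℝ) * pbar n) atTop atTop) :
    ∃ CH1 : ℝ, 0 < CH1 ∧
      ∀ φ : ℕ → ℝ, (∀ n, 0 < φ n) →
        (∀ n : ℕ, φ n ≤ 1 / (pbar n * ((n : ℝ) * pbar n) ^ 5)) →
        ∀ᶠ n : ℕ in atTop,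
          Pr α (p n) {c : Config n K L |
              (((univ.filter fun v =>
                  ¬(H1cond CH1 (pbar n) c v ∧ H2cond (pbar n) (p n) c v)).card : ℝ) ≤ φ n / 3)
              ∧ φ n < ((univ \ Hset CH1 (pbar n) (p n) c).card : ℝ)} ≤
            Real.exp (-(φ n * ((n : ℝ) * pbar n) / (4 * (Real.log ((n : ℝ) * pbar n)) ^ 5)) *
              Real.log (2 * (n : ℝ) / (φ n * L * (Real.log ((n : ℝ) * pbar n)) ^ 5))) :=
  statement6_general K L hL α hαpos hαsum p hp0 hpsum pbar hpbar hgrow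
end

section
/- Lemma (existence of an equalizer distribution, Lemma B.1): let (i*, j*) with i* < j* be indices minimizing D_{L+}(α, p(i), p(j)) over pairs i ≠ j, and assume all p(i,j,ℓ) > 0. Then there exists a K×(L+1) row-stochastic matrix q such that D(α,p) = Σ_{k=1}^K α_k·kl(q(k), p(i*,k)) = Σ_{k=1}^K α_k·kl(q(k), p(j*,k)). -/
open Finset

/- ### Auxiliary lemmas -/

private lemma phi_eq {c : ℝ} (hc : 0 < c) (x : ℝ) :
    x * Real.log (x / c) = c * ((x / c) * Real.log (x / c)) := by
  have h : c * (x / c) = x := by field_simp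
  rw [← mul_assoc, h]

private lemma phi_cont {c : ℝ} (hc : 0 < c) :
    Continuous fun x : ℝ => x * Real.log (x / c) := by
  have h : (fun x : ℝ => x * Real.log (x / c)) =
      fun x => c * ((x / c) * Real.log (x / c)) := funext fun x => phi_eq hc x
  rw [h]
  exact continuous_const.mul (Real.continuous_mul_log.comp (continuous_id.div_const c))

private lemma phi_convex {c a b t : ℝ} (hc : 0 < c) (ha : 0 ≤ a) (hb : 0 ≤ b)
    (ht0 : 0 ≤ t) (ht1 : t ≤ 1) :
    ((1 - t) * a + t * b) * Real.log (((1 - t) * a + t * b) / c) ≤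
      (1 - t) * (a * Real.log (a / c)) + t * (b * Real.log (b / c)) := by
  have h := Real.convexOn_mul_log.2 (Set.mem_Ici.2 (div_nonneg ha hc.le))
    (Set.mem_Ici.2 (div_nonneg hb hc.le)) (by linarith : (0:ℝ) ≤ 1 - t) ht0 (by ring)
  simp only [smul_eq_mul] at h
  have key : (1 - t) * (a / c) + t * (b / c) = ((1 - t) * a + t * b) / c := by ring
  rw [key] at h
  calc ((1 - t) * a + t * b) * Real.log (((1 - t) * a + t * b) / c)
      = c * ((((1 - t) * a + t * b) / c) * Real.log (((1 - t) * a + t * b) / c)) :=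
        phi_eq hc _
    _ ≤ c * ((1 - t) * (a / c * Real.log (a / c)) + t * (b / c * Real.log (b / c))) :=
        mul_le_mul_of_nonneg_left h hc.le
    _ = (1 - t) * (a * Real.log (a / c)) + t * (b * Real.log (b / c)) := by
        rw [mul_add, phi_eq hc a, phi_eq hc b]; ring

private lemma phi_ge {c x : ℝ} (hc : 0 < c) (hx : 0 ≤ x) :
    x - c ≤ x * Real.log (x / c) := by
  rcases eq_or_lt_of_le hx with h | h
  · rw [← h]; simp; linarith
  · have h1 : Real.log (c / x) ≤ c / x - 1 := Real.log_le_sub_one_of_pos (div_pos hc h)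
    have h2 : Real.log (x / c) = - Real.log (c / x) := by
      rw [Real.log_div h.ne' hc.ne', Real.log_div hc.ne' h.ne']; ring
    rw [h2]
    have h3 := mul_le_mul_of_nonneg_left h1 h.le
    have hx' : x * (c / x - 1) = c - x := by field_simp
    nlinarith

private lemma kl_nonneg {L : ℕ} {x c : Fin (L + 1) → ℝ} (hx : ∀ ℓ, 0 ≤ x ℓ)
    (hxs : ∑ ℓ, x ℓ = 1) (hc : ∀ ℓ, 0 < c ℓ) (hcs : ∑ ℓ, c ℓ = 1) : 0 ≤ kl x c := by
  have h : ∑ ℓ, (x ℓ - c ℓ) ≤ kl x c :=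
    Finset.sum_le_sum fun ℓ _ => phi_ge (hc ℓ) (hx ℓ)
  rw [Finset.sum_sub_distrib, hxs, hcs] at h
  linarith

private lemma kl_self {L : ℕ} {c : Fin (L + 1) → ℝ} (hc : ∀ ℓ, 0 < c ℓ) : kl c c = 0 := by
  apply Finset.sum_eq_zero
  intro ℓ _
  rw [div_self (hc ℓ).ne', Real.log_one, mul_zero]

/-- The equalizing lemma: given a minimizer `q0` of `max(F, G)` with `F q0 ≤ G q0`,
produce a stochastic matrix where both values equal the minimum `G q0`. -/
private lemma equalizer {K L : ℕ} (α : Fin K → ℝ) (hα : ∀ k, 0 < α k)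
    (pa pb : Fin K → Fin (L + 1) → ℝ)
    (hpa : ∀ k ℓ, 0 < pa k ℓ) (hpb : ∀ k ℓ, 0 < pb k ℓ)
    (hpas : ∀ k, ∑ ℓ, pa k ℓ = 1) (hpbs : ∀ k, ∑ ℓ, pb k ℓ = 1)
    (q0 : Fin K → Fin (L + 1) → ℝ) (hq0 : IsStochastic q0)
    (hle : ∑ k, α k * kl (q0 k) (pa k) ≤ ∑ k, α k * kl (q0 k) (pb k))
    (hlow : ∀ y, IsStochastic y → ∑ k, α k * kl (q0 k) (pb k) ≤
      max (∑ k, α k * kl (y k) (pa k)) (∑ k, α k * kl (y k) (pb k))) :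
    ∃ q, IsStochastic q ∧
      ∑ k, α k * kl (q k) (pa k) = ∑ k, α k * kl (q0 k) (pb k) ∧
      ∑ k, α k * kl (q k) (pb k) = ∑ k, α k * kl (q0 k) (pb k) := by
  set D := ∑ k, α k * kl (q0 k) (pb k) with hDdef
  set Q : ℝ → Fin K → Fin (L + 1) → ℝ :=
    fun t k ℓ => (1 - t) * q0 k ℓ + t * pb k ℓ with hQdef
  have hQstoch : ∀ t : ℝ, 0 ≤ t → t ≤ 1 → IsStochastic (Q t) := by
    intro t ht0 ht1 k
    refine ⟨fun ℓ => add_nonneg (mul_nonneg (by linarith) ((hq0 k).1 ℓ))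
      (mul_nonneg ht0 (hpb k ℓ).le), ?_⟩
    rw [Finset.sum_add_distrib, ← Finset.mul_sum, ← Finset.mul_sum, (hq0 k).2, hpbs k]
    ring
  have hcont : ∀ (c : Fin K → Fin (L + 1) → ℝ), (∀ k ℓ, 0 < c k ℓ) →
      Continuous fun t : ℝ => ∑ k, α k * kl (Q t k) (c k) := by
    intro c hc
    apply continuous_finset_sum
    intro k _
    apply Continuous.mul continuous_const
    show Continuous fun t : ℝ => ∑ ℓ, Q t k ℓ * Real.log (Q t k ℓ / c k ℓ)
    apply continuous_finset_sum
    intro ℓ _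
    exact (phi_cont (hc k ℓ)).comp (by continuity)
  have hQ0 : Q 0 = q0 := by funext k ℓ; simp [hQdef]
  have hQ1 : Q 1 = pb := by funext k ℓ; simp [hQdef]
  have hGpb : ∑ k, α k * kl (pb k) (pb k) = 0 := by
    apply Finset.sum_eq_zero; intro k _; rw [kl_self (hpb k), mul_zero]
  have hFpb : 0 ≤ ∑ k, α k * kl (pb k) (pa k) :=
    Finset.sum_nonneg fun k _ => mul_nonneg (hα k).le
      (kl_nonneg (fun ℓ => (hpb k ℓ).le) (hpbs k) (hpa k) (hpas k))
  set h : ℝ → ℝ := fun t =>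
    ∑ k, α k * kl (Q t k) (pa k) - ∑ k, α k * kl (Q t k) (pb k) with hhdef
  have hh0 : h 0 ≤ 0 := by simp only [hhdef, hQ0]; linarith
  have hh1 : 0 ≤ h 1 := by
    simp only [hhdef, hQ1, hGpb, sub_zero]; exact hFpb
  have hhc : ContinuousOn h (Set.Icc (0:ℝ) 1) :=
    ((hcont pa hpa).sub (hcont pb hpb)).continuousOn
  obtain ⟨t, ht, hteq⟩ := intermediate_value_Icc (by norm_num : (0:ℝ) ≤ 1) hhc ⟨hh0, hh1⟩
  have htS : IsStochastic (Q t) := hQstoch t ht.1 ht.2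
  have hFG : ∑ k, α k * kl (Q t k) (pa k) = ∑ k, α k * kl (Q t k) (pb k) := by
    have : h t = 0 := hteq
    simp only [hhdef] at this
    linarith
  have hDnn : 0 ≤ D :=
    Finset.sum_nonneg fun k _ => mul_nonneg (hα k).le
      (kl_nonneg ((hq0 k).1) ((hq0 k).2) (hpb k) (hpbs k))
  have hGle : ∑ k, α k * kl (Q t k) (pb k) ≤ D := by
    have hterm : ∀ k, kl (Q t k) (pb k) ≤ (1 - t) * kl (q0 k) (pb k) := by
      intro k
      have h1 : kl (Q t k) (pb k) ≤
          ∑ ℓ, ((1 - t) * (q0 k ℓ * Real.log (q0 k ℓ / pb k ℓ)) +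
            t * (pb k ℓ * Real.log (pb k ℓ / pb k ℓ))) := by
        apply Finset.sum_le_sum
        intro ℓ _
        exact phi_convex (hpb k ℓ) ((hq0 k).1 ℓ) (hpb k ℓ).le ht.1 ht.2
      have h2 : ∑ ℓ, ((1 - t) * (q0 k ℓ * Real.log (q0 k ℓ / pb k ℓ)) +
          t * (pb k ℓ * Real.log (pb k ℓ / pb k ℓ))) =
          (1 - t) * kl (q0 k) (pb k) + t * kl (pb k) (pb k) := by
        rw [Finset.sum_add_distrib, ← Finset.mul_sum, ← Finset.mul_sum]; rfl
      rw [h2, kl_self (hpb k), mul_zero, add_zero] at h1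
      exact h1
    calc ∑ k, α k * kl (Q t k) (pb k)
        ≤ ∑ k, α k * ((1 - t) * kl (q0 k) (pb k)) :=
          Finset.sum_le_sum fun k _ => mul_le_mul_of_nonneg_left (hterm k) (hα k).le
      _ = (1 - t) * D := by rw [hDdef, Finset.mul_sum]; congr 1; funext k; ring
      _ ≤ D := by nlinarith [ht.1]
  have hDle : D ≤ ∑ k, α k * kl (Q t k) (pb k) := by
    have := hlow (Q t) htS
    rwa [hFG, max_self] at this
  exact ⟨Q t, htS, by rw [hFG]; linarith, by linarith⟩

/-- **Lemma B.1 (existence of an equalizer distribution).** If `(i*, j*)`, `i* < j*`,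
minimizes `D_{L+}(α, p(i), p(j))` over pairs `i ≠ j` and all entries of `p` are positive,
then there is a row-stochastic matrix `q` with
`D(α,p) = Σ_k α_k kl(q(k), p(i*,k)) = Σ_k α_k kl(q(k), p(j*,k))`. -/
theorem statement7
    (K L : ℕ) (hK : 2 ≤ K) (hL : 1 ≤ L)
    (α : Fin K → ℝ) (hαpos : ∀ k, 0 < α k) (hαsum : ∑ k, α k = 1)
    (p : Fin K → Fin K → Fin (L + 1) → ℝ)
    (hp0 : ∀ i j ℓ, 0 < p i j ℓ) (hp1 : ∀ i j ℓ, p i j ℓ ≤ 1)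
    (hpsum : ∀ i j, ∑ ℓ, p i j ℓ = 1)
    (istar jstar : Fin K) (hlt : istar < jstar)
    (hmin : ∀ i j : Fin K, i ≠ j → DLplus α (p istar) (p jstar) ≤ DLplus α (p i) (p j)) :
    ∃ q : Fin K → Fin (L + 1) → ℝ, IsStochastic q ∧
      Ddiv α p = ∑ k, α k * kl (q k) (p istar k) ∧
      Ddiv α p = ∑ k, α k * kl (q k) (p jstar k) := by
  classical
  set F : (Fin K → Fin (L + 1) → ℝ) → ℝ := fun y => ∑ k, α k * kl (y k) (p istar k)
    with hFdef
  set G : (Fin K → Fin (L + 1) → ℝ) → ℝ := fun y => ∑ k, α k * kl (y k) (p jstar k)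
    with hGdef
  set S : Set (Fin K → Fin (L + 1) → ℝ) := {y | IsStochastic y} with hSdef
  -- compactness of S
  have hSsub : S ⊆ Set.pi Set.univ fun _ : Fin K =>
      Set.pi Set.univ fun _ : Fin (L + 1) => Set.Icc (0:ℝ) 1 := by
    intro y hy k _ ℓ _
    refine ⟨(hy k).1 ℓ, ?_⟩
    calc y k ℓ ≤ ∑ m, y k m :=
          Finset.single_le_sum (fun m _ => (hy k).1 m) (Finset.mem_univ ℓ)
      _ = 1 := (hy k).2
  have hbox : IsCompact (Set.pi Set.univ fun _ : Fin K =>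
      Set.pi Set.univ fun _ : Fin (L + 1) => Set.Icc (0:ℝ) 1) :=
    isCompact_univ_pi fun _ => isCompact_univ_pi fun _ => isCompact_Icc
  have hSclosed : IsClosed S := by
    have hrw : S = (⋂ k, ⋂ ℓ, {y : Fin K → Fin (L + 1) → ℝ | 0 ≤ y k ℓ}) ∩
        ⋂ k, {y : Fin K → Fin (L + 1) → ℝ | ∑ ℓ, y k ℓ = 1} := by
      ext y
      simp only [hSdef, Set.mem_setOf_eq, Set.mem_inter_iff, Set.mem_iInter,
        Set.mem_setOf_eq, IsStochastic]
      constructor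
      · intro h; exact ⟨fun k ℓ => (h k).1 ℓ, fun k => (h k).2⟩
      · intro h k; exact ⟨fun ℓ => h.1 k ℓ, h.2 k⟩
    rw [hrw]
    apply IsClosed.inter
    · exact isClosed_iInter fun k => isClosed_iInter fun ℓ =>
        isClosed_le continuous_const ((continuous_apply ℓ).comp (continuous_apply k))
    · exact isClosed_iInter fun k => isClosed_eq
        (continuous_finset_sum _ fun ℓ _ =>
          (continuous_apply ℓ).comp (continuous_apply k)) continuous_const
  have hScomp : IsCompact S := hbox.of_isClosed_subset hSclosed hSsub
  -- continuity of F and G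
  have hcontFG : ∀ i : Fin K, Continuous fun y : Fin K → Fin (L + 1) → ℝ =>
      ∑ k, α k * kl (y k) (p i k) := by
    intro i
    apply continuous_finset_sum
    intro k _
    apply Continuous.mul continuous_const
    show Continuous fun y : Fin K → Fin (L + 1) → ℝ =>
      ∑ ℓ, y k ℓ * Real.log (y k ℓ / p i k ℓ)
    apply continuous_finset_sum
    intro ℓ _
    exact (phi_cont (hp0 i k ℓ)).comp ((continuous_apply ℓ).comp (continuous_apply k))
  have hcontF : Continuous F := hcontFG istar
  have hcontG : Continuous G := hcontFG jstar
  -- S is nonempty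
  have hpS : p istar ∈ S := fun k => ⟨fun ℓ => (hp0 istar k ℓ).le, hpsum istar k⟩
  -- minimizer
  obtain ⟨q0, hq0S, hq0min⟩ := hScomp.exists_isMinOn ⟨p istar, hpS⟩
    ((hcontF.max hcontG).continuousOn)
  have hq0S' : IsStochastic q0 := hq0S
  -- DLplus equals the minimum
  have hDL : DLplus α (p istar) (p jstar) = max (F q0) (G q0) := by
    apply IsLeast.csInf_eq
    constructor
    · exact ⟨q0, hq0S', rfl⟩
    · rintro d ⟨y, hy, rfl⟩
      exact isMinOn_iff.mp hq0min y hy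
  -- Ddiv equals DLplus at (istar, jstar)
  have hDdiv : Ddiv α p = DLplus α (p istar) (p jstar) := by
    apply IsLeast.csInf_eq
    constructor
    · exact ⟨istar, jstar, ne_of_lt hlt, rfl⟩
    · rintro d ⟨i, j, hij, rfl⟩
      exact hmin i j hij
  rcases le_total (F q0) (G q0) with hcase | hcase
  · have hmax : max (F q0) (G q0) = G q0 := max_eq_right hcase
    obtain ⟨q, hqS, hqa, hqb⟩ := equalizer α hαpos (p istar) (p jstar)
      (hp0 istar) (hp0 jstar) (hpsum istar) (hpsum jstar) q0 hq0S' hcase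
      (fun y hy => by
        have h := isMinOn_iff.mp hq0min y hy
        rw [hmax] at h
        exact h)
    refine ⟨q, hqS, ?_, ?_⟩
    · rw [hDdiv, hDL, hmax]; exact hqa.symm
    · rw [hDdiv, hDL, hmax]; exact hqb.symm
  · have hmax : max (F q0) (G q0) = F q0 := max_eq_left hcase
    obtain ⟨q, hqS, hqa, hqb⟩ := equalizer α hαpos (p jstar) (p istar)
      (hp0 jstar) (hp0 istar) (hpsum jstar) (hpsum istar) q0 hq0S' hcase
      (fun y hy => by
        have h := isMinOn_iff.mp hq0min y hy
        rw [hmax, max_comm] at h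
        exact h)
    refine ⟨q, hqS, ?_, ?_⟩
    · rw [hDdiv, hDL, hmax]; exact hqb.symm
    · rw [hDdiv, hDL, hmax]; exact hqa.symm
end

section
/- Concentration over light couples (bound on P₂ in the proof of Lemma 2): let n ≥ 1, p̄ ∈ (0,1], and let (A_{vw})_{1≤w<v≤n} be independent {0,1}-valued random variables with P(A_{vw}=1) = M_{vw} ≤ p̄; extend symmetrically by A_{wv} = A_{vw}, M_{wv} = M_{vw}, with zero diagonal. Let x, y ∈ ℝⁿ with ‖x‖₂ ≤ 1 and ‖y‖₂ ≤ 1, and define the set of light couples 𝓛 = {(v,w) : |x_v·y_w| ≤ √(p̄/n)}. Then for every C > 3: P( Σ_{(v,w)∈𝓛} x_v·A_{vw}·y_w − xᵀM y ≥ C·√(n·p̄) ) ≤ exp( (3−C)·n/2 ). -/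
/-!
Write `ℓ_{vw}` for `x_v y_w` on light couples and `0` elsewhere, and `L = √(p̄/n)`. The deviation
splits into a centred sum `∑_{v<w} c_{vw} (A_{vw} - M_{vw})` with `c_{vw} = ℓ_{vw} + ℓ_{wv}`, and a
bias `∑ (ℓ_{vw} - x_v y_w) M_{vw}`. Since `|ℓ - x_v y_w| ≤ (x_v y_w)² / L`, the bias is at most
`p̄/L · ‖x‖² ‖y‖² ≤ √(n p̄)`. With `λ = 1/(2L)` every `|λ c_{vw}| ≤ 1`, so each Bernoulli factor of
the moment generating function is at most `exp(λ² c_{vw}² M_{vw})`, and `∑ c_{vw}² M_{vw} ≤ 2 p̄`.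
The exponential Markov inequality then bounds the probability by
`exp(-λ (C - 1) √(n p̄) + 2 λ² p̄) = exp((2 - C) n / 2)`.
-/

open Finset

/-- Probability mass of an outcome of independent Bernoulli random variables indexed by the
unordered pairs, with means `M q`. -/
noncomputable def massB {n : ℕ} (M : Pairs n → ℝ) (ω : Pairs n → Bool) : ℝ :=
  ∏ q, (if ω q then M q else 1 - M q)

/-- Probability of a set of outcomes. -/
noncomputable def PrB {n : ℕ} (M : Pairs n → ℝ) (S : Set (Pairs n → Bool)) : ℝ :=
  ∑ ω : Pairs n → Bool, Set.indicator S (massB M) ω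

/-- The symmetric zero-diagonal matrix of means built from `M`. -/
def Mmat {n : ℕ} (M : Pairs n → ℝ) (v w : Fin n) : ℝ :=
  if h : v < w then M ⟨(v, w), h⟩ else if h' : w < v then M ⟨(w, v), h'⟩ else 0

/-- The symmetric zero-diagonal 0/1 matrix of outcomes built from `ω`. -/
def Aval {n : ℕ} (ω : Pairs n → Bool) (v w : Fin n) : ℝ :=
  if h : v < w then (if ω ⟨(v, w), h⟩ then 1 else 0)
  else if h' : w < v then (if ω ⟨(w, v), h'⟩ then 1 else 0) else 0

section BernoulliProduct

variable {n : ℕ} {M : Pairs n → ℝ}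

lemma massB_nonneg (hM0 : ∀ q, 0 ≤ M q) (hM1 : ∀ q, M q ≤ 1) (ω : Pairs n → Bool) :
    0 ≤ massB M ω :=
  prod_nonneg fun q _ => by cases ω q <;> simp [hM0 q, hM1 q]

lemma PrB_mono (hM0 : ∀ q, 0 ≤ M q) (hM1 : ∀ q, M q ≤ 1) {S T : Set (Pairs n → Bool)}
    (hST : S ⊆ T) : PrB M S ≤ PrB M T :=
  sum_le_sum fun ω _ => Set.indicator_le_indicator_of_subset hST (massB_nonneg hM0 hM1) ω

lemma sum_massB_mul_prod (M : Pairs n → ℝ) (g : Pairs n → Bool → ℝ) :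
    ∑ ω, massB M ω * ∏ q, g q (ω q) = ∏ q, (M q * g q true + (1 - M q) * g q false) := by
  simp only [massB, ← prod_mul_distrib]
  rw [← Fintype.prod_sum fun q (b : Bool) => (if b then M q else 1 - M q) * g q b]
  simp

lemma PrB_le_exp_mul_sum (hM0 : ∀ q, 0 ≤ M q) (hM1 : ∀ q, M q ≤ 1)
    (f : (Pairs n → Bool) → ℝ) (t : ℝ) {lam : ℝ} (hlam : 0 ≤ lam) :
    PrB M {ω | t ≤ f ω} ≤ Real.exp (-(lam * t)) * ∑ ω, massB M ω * Real.exp (lam * f ω) := by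
  rw [PrB, mul_sum]
  refine sum_le_sum fun ω _ => ?_
  rw [mul_left_comm, ← Real.exp_add]
  by_cases h : t ≤ f ω
  · rw [Set.indicator_of_mem (show ω ∈ {ω | t ≤ f ω} from h)]
    refine le_mul_of_one_le_right (massB_nonneg hM0 hM1 ω) (Real.one_le_exp ?_)
    nlinarith
  · rw [Set.indicator_of_notMem (show ω ∉ {ω | t ≤ f ω} from h)]
    exact mul_nonneg (massB_nonneg hM0 hM1 ω) (Real.exp_pos _).le

lemma bernoulli_mgf_le {m u : ℝ} (hm0 : 0 ≤ m) (hm1 : m ≤ 1) (hu : |u| ≤ 1) :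
    m * Real.exp (u * (1 - m)) + (1 - m) * Real.exp (u * (0 - m)) ≤ Real.exp (u ^ 2 * m) := by
  have hexp : ∀ v : ℝ, |v| ≤ 1 → Real.exp v ≤ 1 + v + v ^ 2 := fun v hv => by
    linarith [(abs_le.mp (Real.abs_exp_sub_one_sub_id_le hv)).2]
  have h1 := hexp (u * (1 - m)) (by
    rw [abs_mul, abs_of_nonneg (by linarith : 0 ≤ 1 - m)]
    nlinarith [abs_nonneg u])
  have h0 := hexp (u * (0 - m)) (by
    rw [abs_mul, abs_of_nonpos (by linarith : 0 - m ≤ 0)]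
    nlinarith [abs_nonneg u])
  calc m * Real.exp (u * (1 - m)) + (1 - m) * Real.exp (u * (0 - m))
      ≤ m * (1 + u * (1 - m) + (u * (1 - m)) ^ 2)
        + (1 - m) * (1 + u * (0 - m) + (u * (0 - m)) ^ 2) := by
        gcongr
    _ = 1 + u ^ 2 * m * (1 - m) := by ring
    _ ≤ u ^ 2 * m + 1 := by nlinarith [sq_nonneg u]
    _ ≤ Real.exp (u ^ 2 * m) := Real.add_one_le_exp _

lemma PrB_centered_sum_ge_le (hM0 : ∀ q, 0 ≤ M q) (hM1 : ∀ q, M q ≤ 1) (c : Pairs n → ℝ)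
    (t : ℝ) {lam : ℝ} (hlam : 0 ≤ lam) (hc : ∀ q, |lam * c q| ≤ 1) :
    PrB M {ω | t ≤ ∑ q, c q * ((if ω q then 1 else 0) - M q)} ≤
      Real.exp (-(lam * t) + lam ^ 2 * ∑ q, c q ^ 2 * M q) := by
  calc PrB M {ω | t ≤ ∑ q, c q * ((if ω q then 1 else 0) - M q)}
      ≤ Real.exp (-(lam * t)) * ∑ ω, massB M ω *
          ∏ q, Real.exp (lam * c q * ((if ω q then 1 else 0) - M q)) := by
        convert PrB_le_exp_mul_sum hM0 hM1 _ t hlam using 4 with ω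
        rw [← Real.exp_sum, mul_sum]
        simp only [mul_assoc]
    _ = Real.exp (-(lam * t)) * ∏ q, (M q * Real.exp (lam * c q * (1 - M q))
          + (1 - M q) * Real.exp (lam * c q * (0 - M q))) := by
        rw [sum_massB_mul_prod M fun q b => Real.exp (lam * c q * ((if b then 1 else 0) - M q))]
        simp
    _ ≤ Real.exp (-(lam * t)) * ∏ q, Real.exp ((lam * c q) ^ 2 * M q) := by
        gcongr with q
        · exact fun q _ => add_nonneg (mul_nonneg (hM0 q) (Real.exp_pos _).le)
            (mul_nonneg (sub_nonneg.mpr (hM1 q)) (Real.exp_pos _).le)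
        · exact bernoulli_mgf_le (hM0 q) (hM1 q) (hc q)
    _ = Real.exp (-(lam * t) + lam ^ 2 * ∑ q, c q ^ 2 * M q) := by
        rw [← Real.exp_sum, ← Real.exp_add, mul_sum]
        simp only [mul_pow, mul_assoc]

end BernoulliProduct

section Pairs

variable {n : ℕ}

lemma sum_sum_eq_sum_pairs (F : Fin n → Fin n → ℝ) (hF : ∀ v, F v v = 0) :
    ∑ v, ∑ w, F v w = ∑ q : Pairs n, (F q.1.1 q.1.2 + F q.1.2 q.1.1) := by
  have hsplit : ∀ v w, F v w = (if v < w then F v w else 0) + (if w < v then F v w else 0) := by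
    intro v w
    rcases lt_trichotomy v w with h | rfl | h
    · simp [h, h.not_gt]
    · simp [hF]
    · simp [h, h.not_gt]
  calc ∑ v, ∑ w, F v w
      = ∑ v, ∑ w, (if v < w then F v w else 0) + ∑ w, ∑ v, (if w < v then F v w else 0) := by
        rw [sum_comm (f := fun w v => if w < v then F v w else 0), ← sum_add_distrib]
        simp only [← sum_add_distrib, ← hsplit]
    _ = ∑ p : Fin n × Fin n, if p.1 < p.2 then F p.1 p.2 + F p.2 p.1 else 0 := by
        rw [Fintype.sum_prod_type' fun v w => if v < w then F v w + F w v else 0]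
        simp only [← sum_add_distrib]
        refine sum_congr rfl fun v _ => sum_congr rfl fun w _ => by split_ifs <;> ring
    _ = ∑ q : Pairs n, (F q.1.1 q.1.2 + F q.1.2 q.1.1) := by
        rw [← sum_filter]
        exact sum_subtype _ (by simp) _

lemma sum_sq_pairs_le_sum_sum_sq (F : Fin n → Fin n → ℝ) :
    ∑ q : Pairs n, (F q.1.1 q.1.2 ^ 2 + F q.1.2 q.1.1 ^ 2) ≤ ∑ v, ∑ w, F v w ^ 2 := by
  calc ∑ q : Pairs n, (F q.1.1 q.1.2 ^ 2 + F q.1.2 q.1.1 ^ 2)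
      = ∑ v, ∑ w, if v = w then 0 else F v w ^ 2 := by
        rw [sum_sum_eq_sum_pairs _ (by simp)]
        refine sum_congr rfl fun q _ => ?_
        rw [if_neg q.2.ne, if_neg q.2.ne']
    _ ≤ ∑ v, ∑ w, F v w ^ 2 := by
        gcongr with v _ w _
        split_ifs <;> simp [sq_nonneg]

lemma Aval_self (ω : Pairs n → Bool) (v : Fin n) : Aval ω v v = 0 := by
  simp [Aval]

lemma Mmat_self (M : Pairs n → ℝ) (v : Fin n) : Mmat M v v = 0 := by
  simp [Mmat]

lemma Mmat_nonneg {M : Pairs n → ℝ} (hM0 : ∀ q, 0 ≤ M q) (v w : Fin n) : 0 ≤ Mmat M v w := by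
  unfold Mmat
  split_ifs <;> simp [hM0]

lemma Mmat_le {M : Pairs n → ℝ} {pb : ℝ} (hpb0 : 0 ≤ pb) (hMpb : ∀ q, M q ≤ pb) (v w : Fin n) :
    Mmat M v w ≤ pb := by
  unfold Mmat
  split_ifs <;> simp [hMpb, hpb0]

lemma sum_mul_Aval_sub_Mmat (ℓ : Fin n → Fin n → ℝ) (ω : Pairs n → Bool) (M : Pairs n → ℝ) :
    ∑ v, ∑ w, ℓ v w * (Aval ω v w - Mmat M v w) =
      ∑ q : Pairs n, (ℓ q.1.1 q.1.2 + ℓ q.1.2 q.1.1) * ((if ω q then 1 else 0) - M q) := by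
  rw [sum_sum_eq_sum_pairs _ (by simp [Aval_self, Mmat_self])]
  refine sum_congr rfl fun q _ => ?_
  simp only [Aval, Mmat, dif_pos q.2, dif_neg q.2.not_gt]
  ring

lemma sum_sq_pair_add_mul_le {M : Pairs n → ℝ} {pb : ℝ} (hpb0 : 0 ≤ pb) (hM0 : ∀ q, 0 ≤ M q)
    (hMpb : ∀ q, M q ≤ pb) (ℓ : Fin n → Fin n → ℝ) :
    ∑ q : Pairs n, (ℓ q.1.1 q.1.2 + ℓ q.1.2 q.1.1) ^ 2 * M q ≤ 2 * pb * ∑ v, ∑ w, ℓ v w ^ 2 := by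
  calc ∑ q : Pairs n, (ℓ q.1.1 q.1.2 + ℓ q.1.2 q.1.1) ^ 2 * M q
      ≤ ∑ q : Pairs n, 2 * pb * (ℓ q.1.1 q.1.2 ^ 2 + ℓ q.1.2 q.1.1 ^ 2) := by
        refine sum_le_sum fun q _ => ?_
        calc (ℓ q.1.1 q.1.2 + ℓ q.1.2 q.1.1) ^ 2 * M q
            ≤ 2 * (ℓ q.1.1 q.1.2 ^ 2 + ℓ q.1.2 q.1.1 ^ 2) * pb := by
              gcongr
              · exact hM0 q
              · nlinarith [sq_nonneg (ℓ q.1.1 q.1.2 - ℓ q.1.2 q.1.1)]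
              · exact hMpb q
          _ = 2 * pb * (ℓ q.1.1 q.1.2 ^ 2 + ℓ q.1.2 q.1.1 ^ 2) := by ring
    _ ≤ 2 * pb * ∑ v, ∑ w, ℓ v w ^ 2 := by
        rw [← mul_sum]
        exact mul_le_mul_of_nonneg_left (sum_sq_pairs_le_sum_sum_sq ℓ) (by positivity)

end Pairs

section LightPart

/-- A term `a = x_v y_w` of the bilinear form counts in the sum over light couples `𝓛` only when
`|a| ≤ L`, with `L = √(p̄/n)`. -/
noncomputable def lightPart (L a : ℝ) : ℝ := if |a| ≤ L then a else 0

lemma abs_lightPart_le {L : ℝ} (hL : 0 ≤ L) (a : ℝ) : |lightPart L a| ≤ L := by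
  unfold lightPart
  split_ifs with h
  · exact h
  · simpa using hL

lemma sq_lightPart_le (L a : ℝ) : lightPart L a ^ 2 ≤ a ^ 2 := by
  unfold lightPart
  split_ifs <;> simp [sq_nonneg]

lemma abs_lightPart_sub_le {L : ℝ} (hL : 0 < L) (a : ℝ) : |lightPart L a - a| ≤ a ^ 2 / L := by
  unfold lightPart
  split_ifs with h
  · simp only [sub_self, abs_zero]
    positivity
  · rw [zero_sub, abs_neg, le_div_iff₀ hL, ← sq_abs a, sq]
    exact mul_le_mul_of_nonneg_left (not_le.mp h).le (abs_nonneg a)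

variable {n : ℕ}

lemma sum_sum_sq_lightPart_le (L : ℝ) (x y : Fin n → ℝ) :
    ∑ v, ∑ w, lightPart L (x v * y w) ^ 2 ≤ (∑ v, x v ^ 2) * ∑ w, y w ^ 2 := by
  rw [sum_mul_sum]
  gcongr with v _ w _
  exact (sq_lightPart_le L _).trans_eq (mul_pow _ _ _)

lemma sum_light_sub_mean_le {L pb : ℝ} (hL : 0 < L) (hpb0 : 0 ≤ pb) {M : Pairs n → ℝ}
    (hM0 : ∀ q, 0 ≤ M q) (hMpb : ∀ q, M q ≤ pb) (x y : Fin n → ℝ) (ω : Pairs n → Bool) :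
    (∑ v, ∑ w, if |x v * y w| ≤ L then x v * Aval ω v w * y w else 0)
        - ∑ v, ∑ w, x v * Mmat M v w * y w ≤
      ∑ q : Pairs n, (lightPart L (x q.1.1 * y q.1.2) + lightPart L (x q.1.2 * y q.1.1))
          * ((if ω q then 1 else 0) - M q)
        + pb / L * ((∑ v, x v ^ 2) * ∑ w, y w ^ 2) := by
  rw [← sum_mul_Aval_sub_Mmat (fun v w => lightPart L (x v * y w))]
  have hterm : ∀ v w, (if |x v * y w| ≤ L then x v * Aval ω v w * y w else 0)
      - x v * Mmat M v w * y w = lightPart L (x v * y w) * (Aval ω v w - Mmat M v w)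
        + (lightPart L (x v * y w) - x v * y w) * Mmat M v w := by
    intro v w
    unfold lightPart
    split_ifs <;> ring
  have hheavy : ∀ v w, (lightPart L (x v * y w) - x v * y w) * Mmat M v w
      ≤ pb / L * (x v ^ 2 * y w ^ 2) := by
    intro v w
    calc (lightPart L (x v * y w) - x v * y w) * Mmat M v w
        ≤ |lightPart L (x v * y w) - x v * y w| * Mmat M v w :=
          mul_le_mul_of_nonneg_right (le_abs_self _) (Mmat_nonneg hM0 v w)
      _ ≤ (x v * y w) ^ 2 / L * pb := by
          gcongr
          · exact Mmat_nonneg hM0 v w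
          · exact abs_lightPart_sub_le hL _
          · exact Mmat_le hpb0 hMpb v w
      _ = pb / L * (x v ^ 2 * y w ^ 2) := by ring
  calc (∑ v, ∑ w, if |x v * y w| ≤ L then x v * Aval ω v w * y w else 0)
        - ∑ v, ∑ w, x v * Mmat M v w * y w
      = ∑ v, ∑ w, (lightPart L (x v * y w) * (Aval ω v w - Mmat M v w)
          + (lightPart L (x v * y w) - x v * y w) * Mmat M v w) := by
        simp only [← sum_sub_distrib, hterm]
    _ ≤ ∑ v, ∑ w, (lightPart L (x v * y w) * (Aval ω v w - Mmat M v w)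
          + pb / L * (x v ^ 2 * y w ^ 2)) :=
        sum_le_sum fun v _ => sum_le_sum fun w _ => add_le_add_right (hheavy v w) _
    _ = _ := by
        rw [sum_mul_sum]
        simp only [sum_add_distrib, mul_sum]

lemma PrB_light_sub_mean_ge_le {L pb : ℝ} (hL : 0 < L) (hpb0 : 0 ≤ pb) (hpb1 : pb ≤ 1)
    {M : Pairs n → ℝ} (hM0 : ∀ q, 0 ≤ M q) (hMpb : ∀ q, M q ≤ pb) {x y : Fin n → ℝ}
    (hx : ∑ v, x v ^ 2 ≤ 1) (hy : ∑ v, y v ^ 2 ≤ 1) (t : ℝ) :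
    PrB M {ω | t ≤ (∑ v, ∑ w, if |x v * y w| ≤ L then x v * Aval ω v w * y w else 0)
        - ∑ v, ∑ w, x v * Mmat M v w * y w} ≤ Real.exp (pb / L ^ 2 - t / (2 * L)) := by
  have hM1 : ∀ q, M q ≤ 1 := fun q => (hMpb q).trans hpb1
  have hxy : (∑ v, x v ^ 2) * ∑ w, y w ^ 2 ≤ 1 := mul_le_one₀ hx (by positivity) hy
  set c : Pairs n → ℝ := fun q => lightPart L (x q.1.1 * y q.1.2) + lightPart L (x q.1.2 * y q.1.1)
  have hc : ∀ q, |(2 * L)⁻¹ * c q| ≤ 1 := by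
    intro q
    rw [abs_mul, abs_of_pos (by positivity), inv_mul_le_one₀ (by positivity)]
    linarith [abs_add_le (lightPart L (x q.1.1 * y q.1.2)) (lightPart L (x q.1.2 * y q.1.1)),
      abs_lightPart_le hL.le (x q.1.1 * y q.1.2), abs_lightPart_le hL.le (x q.1.2 * y q.1.1)]
  have hvar : ∑ q, c q ^ 2 * M q ≤ 2 * pb :=
    (sum_sq_pair_add_mul_le hpb0 hM0 hMpb fun v w => lightPart L (x v * y w)).trans
      (mul_le_of_le_one_right (by positivity) ((sum_sum_sq_lightPart_le L x y).trans hxy))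
  have hevent : {ω | t ≤ (∑ v, ∑ w, if |x v * y w| ≤ L then x v * Aval ω v w * y w else 0)
        - ∑ v, ∑ w, x v * Mmat M v w * y w} ⊆
      {ω | t - pb / L ≤ ∑ q, c q * ((if ω q then 1 else 0) - M q)} := by
    intro ω (hω : t ≤ _)
    have hbias : pb / L * ((∑ v, x v ^ 2) * ∑ w, y w ^ 2) ≤ pb / L :=
      mul_le_of_le_one_right (by positivity) hxy
    change t - pb / L ≤ _
    linarith [sum_light_sub_mean_le hL hpb0 hM0 hMpb x y ω]
  calc _ ≤ _ := PrB_mono hM0 hM1 hevent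
    _ ≤ _ := PrB_centered_sum_ge_le hM0 hM1 c _ (by positivity) hc
    _ ≤ Real.exp (-((2 * L)⁻¹ * (t - pb / L)) + (2 * L)⁻¹ ^ 2 * (2 * pb)) := by gcongr
    _ = Real.exp (pb / L ^ 2 - t / (2 * L)) := by
      congr 1
      field_simp
      ring

end LightPart

theorem statement17_general
    (n : ℕ) (pb : ℝ) (hpb0 : 0 < pb) (hpb1 : pb ≤ 1)
    (M : Pairs n → ℝ) (hM0 : ∀ q, 0 ≤ M q) (hMpb : ∀ q, M q ≤ pb)
    (x y : Fin n → ℝ) (hx : ∑ v, x v ^ 2 ≤ 1) (hy : ∑ v, y v ^ 2 ≤ 1)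
    (C : ℝ) :
    PrB M { ω |
        C * Real.sqrt (n * pb) ≤
          (∑ v, ∑ w, (if |x v * y w| ≤ Real.sqrt (pb / n) then x v * Aval ω v w * y w else 0))
            - ∑ v, ∑ w, x v * Mmat M v w * y w } ≤
      Real.exp ((3 - C) * n / 2) := by
  rcases n.eq_zero_or_pos with rfl | hn
  · simp [PrB, massB]
  set L := Real.sqrt (pb / n)
  have hL : 0 < L := by positivity
  have hLsq : L ^ 2 * n = pb := by
    rw [Real.sq_sqrt (by positivity)]
    field_simp
  have hnpb : Real.sqrt (n * pb) = n * L := by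
    rw [← hLsq, ← Real.sqrt_sq (by positivity : (0 : ℝ) ≤ n * L)]
    ring_nf
  refine (PrB_light_sub_mean_ge_le hL hpb0.le hpb1 hM0 hMpb hx hy _).trans ?_
  rw [Real.exp_le_exp, hnpb, ← hLsq]
  field_simp
  linarith

/-- **Concentration over light couples (bound on `P₂` in the proof of Lemma 2).**
For a symmetric random 0/1 matrix with zero diagonal and independent entries of means
`M_{vw} ≤ p̄`, unit vectors `x, y`, and the light couples `𝓛 = {(v,w) : |x_v y_w| ≤ √(p̄/n)}`,
for every `C > 3`,
`P( Σ_{(v,w)∈𝓛} x_v A_{vw} y_w − xᵀMy ≥ C√(np̄) ) ≤ exp((3−C)n/2)`. -/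
theorem statement17
    (n : ℕ) (pb : ℝ) (hpb0 : 0 < pb) (hpb1 : pb ≤ 1)
    (M : Pairs n → ℝ) (hM0 : ∀ q, 0 ≤ M q) (hMpb : ∀ q, M q ≤ pb)
    (x y : Fin n → ℝ) (hx : ∑ v, x v ^ 2 ≤ 1) (hy : ∑ v, y v ^ 2 ≤ 1)
    (C : ℝ) (hC : 3 < C) :
    PrB M { ω |
        C * Real.sqrt (n * pb) ≤
          (∑ v, ∑ w, (if |x v * y w| ≤ Real.sqrt (pb / n) then x v * Aval ω v w * y w else 0))
            - ∑ v, ∑ w, x v * Mmat M v w * y w } ≤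
      Real.exp ((3 - C) * n / 2) :=
  statement17_general n pb hpb0 hpb1 M hM0 hMpb x y hx hy C
end

section
/- Deterministic low-rank approximation transfer (from the proof of Theorem 3): let A, Â, M be real n×m matrices with rank(M) ≤ K and rank(Â) ≤ K, and suppose ‖A − Â‖₂ ≤ C₁ · inf{ ‖A − X‖₂ : X an n×m real matrix with rank(X) ≤ K } for some constant C₁ ≥ 0, where ‖·‖₂ is the spectral norm. Then ‖M − Â‖_F² ≤ 4K·(1 + C₁²)·‖A − M‖₂², where ‖·‖_F is the Frobenius norm. -/
open Finset

/-- The spectral (operator `ℓ² → ℓ²`) norm of a real matrix, defined as the supremum of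
`‖X x‖₂` over vectors `x` with `‖x‖₂ ≤ 1`. -/
noncomputable def specNorm {n m : ℕ} (X : Matrix (Fin n) (Fin m) ℝ) : ℝ :=
  sSup { r | ∃ x : Fin m → ℝ, (∑ j, x j ^ 2) ≤ 1 ∧
    r = Real.sqrt (∑ i, (∑ j, X i j * x j) ^ 2) }

/-- Squared Frobenius norm of a real matrix. -/
def frobSq {n m : ℕ} (X : Matrix (Fin n) (Fin m) ℝ) : ℝ :=
  ∑ i, ∑ j, X i j ^ 2

/-!
If `(bₖ)` is an orthonormal basis of the row space of `X`, Parseval applied to each row gives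
`‖X‖_F² = ∑ₖ ‖X bₖ‖² ≤ rank X · ‖X‖₂²`. For `X = M - Â` the rank is at most `2K`, and since `M`
competes in the infimum, `‖M - Â‖₂ ≤ ‖M - A‖₂ + ‖A - Â‖₂ ≤ (1 + C₁)‖A - M‖₂`.
It remains to note `(1 + C₁)² ≤ 2(1 + C₁²)`.
-/

open scoped Matrix.Norms.L2Operator

theorem EuclideanSpace.real_norm_toLp_eq {κ : Type*} [Fintype κ] (x : κ → ℝ) :
    ‖WithLp.toLp 2 x‖ = √(∑ j, x j ^ 2) := by
  rw [← EuclideanSpace.real_norm_sq_eq, Real.sqrt_sq (norm_nonneg _)]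

namespace Matrix

theorem rank_sub_le {ι κ R : Type*} [Fintype κ] [Field R] (A B : Matrix ι κ R) :
    (A - B).rank ≤ A.rank + B.rank := by
  have hrange : LinearMap.range (A - B).mulVecLin ≤
      LinearMap.range A.mulVecLin ⊔ LinearMap.range B.mulVecLin := by
    rintro _ ⟨x, rfl⟩
    rw [mulVecLin_apply, sub_mulVec]
    exact Submodule.sub_mem _ (Submodule.mem_sup_left ⟨x, rfl⟩) (Submodule.mem_sup_right ⟨x, rfl⟩)
  exact (Submodule.finrank_mono hrange).trans (Submodule.finrank_add_le_finrank_add_finrank _ _)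

theorem sum_sq_le_rank_mul_l2_opNorm_sq {ι κ : Type*} [Fintype ι] [Fintype κ] [DecidableEq κ]
    (X : Matrix ι κ ℝ) : ∑ i, ∑ j, X i j ^ 2 ≤ X.rank * ‖X‖ ^ 2 := by
  set W : Submodule ℝ (EuclideanSpace ℝ κ) :=
    Submodule.span ℝ (Set.range fun i ↦ WithLp.toLp 2 (X i))
  have hW : Module.finrank ℝ W = X.rank := by
    rw [rank_eq_finrank_span_row,
      ← LinearEquiv.finrank_map_eq (WithLp.linearEquiv 2 ℝ (κ → ℝ)).symm, Submodule.map_span,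
      ← Set.range_comp]
    rfl
  set b := stdOrthonormalBasis ℝ W
  have hrow : ∀ i, ∑ j, X i j ^ 2 = ∑ k, ((X *ᵥ (b k : EuclideanSpace ℝ κ)) i) ^ 2 := by
    intro i
    have hmem : WithLp.toLp 2 (X i) ∈ W := Submodule.subset_span ⟨i, rfl⟩
    rw [← EuclideanSpace.real_norm_sq_eq (WithLp.toLp 2 (X i)),
      show ‖WithLp.toLp 2 (X i)‖ = ‖(⟨_, hmem⟩ : W)‖ from rfl, ← b.sum_sq_inner_right]
    refine Finset.sum_congr rfl fun k _ ↦ ?_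
    rw [Submodule.coe_inner, EuclideanSpace.inner_eq_star_dotProduct, star_trivial, mulVec]
  have hcol : ∀ k, ∑ i, ((X *ᵥ (b k : EuclideanSpace ℝ κ)) i) ^ 2 ≤ ‖X‖ ^ 2 := by
    intro k
    have hunit : ‖(b k : EuclideanSpace ℝ κ)‖ = 1 := b.orthonormal.1 k
    have h := X.l2_opNorm_mulVec (b k : EuclideanSpace ℝ κ)
    rw [hunit, mul_one] at h
    calc ∑ i, ((X *ᵥ (b k : EuclideanSpace ℝ κ)) i) ^ 2
        = ‖(EuclideanSpace.equiv ι ℝ).symm (X *ᵥ (b k : EuclideanSpace ℝ κ))‖ ^ 2 :=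
          (EuclideanSpace.real_norm_sq_eq
            ((EuclideanSpace.equiv ι ℝ).symm (X *ᵥ (b k : EuclideanSpace ℝ κ)))).symm
      _ ≤ ‖X‖ ^ 2 := pow_le_pow_left₀ (norm_nonneg _) h 2
  calc ∑ i, ∑ j, X i j ^ 2 = ∑ k, ∑ i, ((X *ᵥ (b k : EuclideanSpace ℝ κ)) i) ^ 2 := by
        simp_rw [hrow]
        exact Finset.sum_comm
    _ ≤ ∑ _k, ‖X‖ ^ 2 := Finset.sum_le_sum fun k _ ↦ hcol k
    _ = X.rank * ‖X‖ ^ 2 := by simp [hW]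

theorem specNorm_eq_l2_opNorm {n m : ℕ} (X : Matrix (Fin n) (Fin m) ℝ) : specNorm X = ‖X‖ := by
  rw [specNorm, l2_opNorm_def, ← ContinuousLinearMap.sSup_unitClosedBall_eq_norm]
  congr 1
  ext r
  simp only [Set.mem_ofPred_eq, Set.mem_image, Metric.mem_closedBall, dist_zero_right]
  constructor
  · rintro ⟨x, hx, rfl⟩
    refine ⟨WithLp.toLp 2 x, ?_, ?_⟩
    · rwa [EuclideanSpace.real_norm_toLp_eq, Real.sqrt_le_one]
    · exact EuclideanSpace.real_norm_toLp_eq _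
  · rintro ⟨v, hv, rfl⟩
    refine ⟨v.ofLp, ?_, ?_⟩
    · rwa [← Real.sqrt_le_one, ← EuclideanSpace.real_norm_toLp_eq v.ofLp]
    · exact EuclideanSpace.real_norm_toLp_eq (X *ᵥ v.ofLp)

end Matrix

/-- **Deterministic low-rank approximation transfer (from the proof of Theorem 3).**
If `rank M ≤ K`, `rank Â ≤ K`, and `‖A − Â‖₂ ≤ C₁ · inf{‖A − X‖₂ : rank X ≤ K}`, then
`‖M − Â‖_F² ≤ 4K(1 + C₁²)‖A − M‖₂²`. -/
theorem statement19
    (n m K : ℕ) (A Ahat M : Matrix (Fin n) (Fin m) ℝ)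
    (hM : M.rank ≤ K) (hAhat : Ahat.rank ≤ K)
    (C₁ : ℝ) (hC₁ : 0 ≤ C₁)
    (happrox : specNorm (A - Ahat) ≤
      C₁ * sInf { r | ∃ X : Matrix (Fin n) (Fin m) ℝ, X.rank ≤ K ∧ r = specNorm (A - X) }) :
    frobSq (M - Ahat) ≤ 4 * K * (1 + C₁ ^ 2) * specNorm (A - M) ^ 2 := by
  simp only [Matrix.specNorm_eq_l2_opNorm] at happrox ⊢
  have hinf : sInf { r | ∃ X : Matrix (Fin n) (Fin m) ℝ, X.rank ≤ K ∧ r = ‖A - X‖ } ≤ ‖A - M‖ :=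
    csInf_le ⟨0, by rintro _ ⟨X, -, rfl⟩; exact norm_nonneg _⟩ ⟨M, hM, rfl⟩
  have hspec : ‖M - Ahat‖ ≤ (1 + C₁) * ‖A - M‖ :=
    calc ‖M - Ahat‖ ≤ ‖M - A‖ + ‖A - Ahat‖ := norm_sub_le_norm_sub_add_norm_sub _ _ _
      _ ≤ ‖A - M‖ + C₁ * ‖A - M‖ := by
        rw [norm_sub_rev]
        gcongr
        exact happrox.trans (mul_le_mul_of_nonneg_left hinf hC₁)
      _ = (1 + C₁) * ‖A - M‖ := by ring
  have hrank : ((M - Ahat).rank : ℝ) ≤ 2 * K := by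
    exact_mod_cast (Matrix.rank_sub_le M Ahat).trans (by omega)
  calc frobSq (M - Ahat) ≤ (M - Ahat).rank * ‖M - Ahat‖ ^ 2 :=
        Matrix.sum_sq_le_rank_mul_l2_opNorm_sq _
    _ ≤ 2 * K * ((1 + C₁) * ‖A - M‖) ^ 2 := by gcongr
    _ = 4 * K * (1 + C₁ ^ 2) * ‖A - M‖ ^ 2 - 2 * K * ((1 - C₁) * ‖A - M‖) ^ 2 := by ring
    _ ≤ 4 * K * (1 + C₁ ^ 2) * ‖A - M‖ ^ 2 := sub_le_self _ (by positivity)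
end
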